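/- Let 0 < H ≤ H' < 1 and let u, v be reals with 0 < v < u ≤ 1. Then φ_{H'}(u, v) ≤ φ_H(u, v). -/

import Mathlib

/-!
`φ_H(u, v)` is the Gram determinant of `B_u, B_v` for a fractional Brownian motion `B` of Hurst
index `H`, and it is homogeneous: `φ_H(u, u t) = u^{4H} φ_H(1, t)`. Writing `a = t^{2H}`,
`c = (1 - t)^{2H}`, the quantity `φ_H(1, t) = a - (1 + a - c)² / 4` is increasing in `a` and `c`
on `[0, 1]²`, and `a`, `c` decrease as `H` grows. It is moreover nonnegative by Heron's formula, since
`1, t^H, (1 - t)^H` are the sides of a triangle; so the factor `u^{4H} ≥ u^{4H'}` only helps.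
-/

/-- `φ_H(u,v) := u^{2H} v^{2H} - (1/4)(u^{2H} + v^{2H} - |u-v|^{2H})²`. -/
noncomputable def phi (H u v : ℝ) : ℝ :=
  u ^ (2 * H) * v ^ (2 * H) - 1/4 * (u ^ (2 * H) + v ^ (2 * H) - |u - v| ^ (2 * H)) ^ 2

open Real

/-- The Gram determinant of two vectors `x, y` with `‖x‖² = 1`, `‖y‖² = a` and `‖x - y‖² = c`. -/
noncomputable def gramDet (a c : ℝ) : ℝ :=
  a - 1/4 * (1 + a - c) ^ 2

/-- By Heron's formula this is `4 · area²` of the triangle with sides `1, y, s`. -/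
lemma gramDet_sq_sq_nonneg {y s : ℝ} (h₁ : 1 ≤ y + s) (h₂ : y ≤ 1 + s) (h₃ : s ≤ 1 + y) :
    0 ≤ gramDet (y ^ 2) (s ^ 2) := by
  have heron : gramDet (y ^ 2) (s ^ 2) =
      1/4 * ((y + s - 1) * (s + 1 - y)) * ((1 + y - s) * (1 + y + s)) := by
    unfold gramDet; ring
  rw [heron]
  exact mul_nonneg (mul_nonneg (by norm_num) (mul_nonneg (by linarith) (by linarith)))
    (mul_nonneg (by linarith) (by linarith))

lemma gramDet_le_gramDet {a c a' c' : ℝ} (ha' : 0 ≤ a') (haa' : a' ≤ a) (ha : a ≤ 1)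
    (hc' : 0 ≤ c') (hcc' : c' ≤ c) (hc : c ≤ 1) :
    gramDet a' c' ≤ gramDet a c := by
  unfold gramDet
  nlinarith [mul_nonneg (sub_nonneg.2 haa') (by linarith : (0 : ℝ) ≤ 2 - a - a' + 2 * c'),
    mul_nonneg (sub_nonneg.2 hcc') (by linarith : (0 : ℝ) ≤ 2 + 2 * a - c - c')]

lemma phi_mul_mul (H : ℝ) {c u v : ℝ} (hc : 0 ≤ c) (hu : 0 ≤ u) (hv : 0 ≤ v) :
    phi H (c * u) (c * v) = (c ^ (2 * H)) ^ 2 * phi H u v := by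
  unfold phi
  rw [← mul_sub, abs_mul, abs_of_nonneg hc, mul_rpow hc hu, mul_rpow hc hv,
    mul_rpow hc (abs_nonneg _)]
  ring

lemma phi_eq_mul_phi_one_div (H : ℝ) {u v : ℝ} (hu : 0 < u) (hv : 0 ≤ v) :
    phi H u v = (u ^ (2 * H)) ^ 2 * phi H 1 (v / u) := by
  calc phi H u v = phi H (u * 1) (u * (v / u)) := by rw [mul_one, mul_div_cancel₀ _ hu.ne']
    _ = (u ^ (2 * H)) ^ 2 * phi H 1 (v / u) :=
      phi_mul_mul H hu.le zero_le_one (div_nonneg hv hu.le)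

lemma phi_one_eq_gramDet (H : ℝ) {t : ℝ} (ht : t ≤ 1) :
    phi H 1 t = gramDet (t ^ (2 * H)) ((1 - t) ^ (2 * H)) := by
  unfold phi gramDet
  rw [one_rpow, one_mul, abs_of_nonneg (sub_nonneg.2 ht)]

lemma phi_one_nonneg {H t : ℝ} (hH₀ : 0 ≤ H) (hH₁ : H ≤ 1) (ht₀ : 0 ≤ t) (ht₁ : t ≤ 1) :
    0 ≤ phi H 1 t := by
  have hs₀ : 0 ≤ 1 - t := sub_nonneg.2 ht₁
  have hs₁ : 1 - t ≤ 1 := by linarith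
  have rpow_two_mul : ∀ x : ℝ, 0 ≤ x → x ^ (2 * H) = (x ^ H) ^ 2 := fun x hx ↦ by
    rw [mul_comm]; exact_mod_cast rpow_mul_natCast hx H 2
  rw [phi_one_eq_gramDet H ht₁, rpow_two_mul t ht₀, rpow_two_mul (1 - t) hs₀]
  have hy := self_le_rpow_of_le_one ht₀ ht₁ hH₁
  have hs := self_le_rpow_of_le_one hs₀ hs₁ hH₁
  have hy₁ := rpow_le_one ht₀ ht₁ hH₀
  have hs₁ := rpow_le_one hs₀ hs₁ hH₀
  exact gramDet_sq_sq_nonneg (by linarith) (by linarith) (by linarith)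

lemma phi_one_antitone {H H' t : ℝ} (hH : 0 ≤ H) (hHH' : H ≤ H') (ht₀ : 0 ≤ t) (ht₁ : t ≤ 1) :
    phi H' 1 t ≤ phi H 1 t := by
  have hs₀ : 0 ≤ 1 - t := sub_nonneg.2 ht₁
  have hs₁ : 1 - t ≤ 1 := by linarith
  have h2H : 0 ≤ 2 * H := by linarith
  rw [phi_one_eq_gramDet H ht₁, phi_one_eq_gramDet H' ht₁]
  exact gramDet_le_gramDet (rpow_nonneg ht₀ _)
    (rpow_le_rpow_of_exponent_ge' ht₀ ht₁ h2H (by linarith)) (rpow_le_one ht₀ ht₁ h2H)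
    (rpow_nonneg hs₀ _)
    (rpow_le_rpow_of_exponent_ge' hs₀ hs₁ h2H (by linarith)) (rpow_le_one hs₀ hs₁ h2H)

/-- For `0 < H ≤ H' < 1` and `0 < v < u ≤ 1`, `φ_{H'}(u,v) ≤ φ_H(u,v)`. -/
theorem phi_antitone_in_H (H H' : ℝ) (hH : 0 < H) (hHH' : H ≤ H') (hH' : H' < 1)
    (u v : ℝ) (hv : 0 < v) (hvu : v < u) (hu : u ≤ 1) :
    phi H' u v ≤ phi H u v := by
  have hu₀ : 0 < u := hv.trans hvu
  have ht₀ : 0 ≤ v / u := div_nonneg hv.le hu₀.le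
  have ht₁ : v / u ≤ 1 := (div_le_one hu₀).2 hvu.le
  have hpow : u ^ (2 * H') ≤ u ^ (2 * H) :=
    rpow_le_rpow_of_exponent_ge hu₀ hu (by linarith)
  rw [phi_eq_mul_phi_one_div H' hu₀ hv.le, phi_eq_mul_phi_one_div H hu₀ hv.le]
  calc (u ^ (2 * H')) ^ 2 * phi H' 1 (v / u)
      ≤ (u ^ (2 * H)) ^ 2 * phi H' 1 (v / u) := by
        gcongr
        exact phi_one_nonneg (by linarith) hH'.le ht₀ ht₁
    _ ≤ (u ^ (2 * H)) ^ 2 * phi H 1 (v / u) := by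
        gcongr
        exact phi_one_antitone hH.le hHH' ht₀ ht₁
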